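/- arXiv:1010.4212 — 8 statements merged into one kernel-verified Lean document; each statement's English description precedes it below -/
import Mathlib

section
/- Let D be a finite universal set of distances (i.e., satisfying the 4-values condition) and let m ∈ D with m > 0. Suppose the set S of numbers r ∈ D such that the smallest element of D strictly greater than r exceeds m + r is nonempty. Then r₀ = min S is a jump number, i.e., the smallest element of D strictly greater than r₀ exceeds 2·r₀. -/
namespace Sauer

def IsMetricTriple (a b c : ℝ) : Prop := a ≤ b + c ∧ b ≤ a + c ∧ c ≤ a + b

def IsUniversalDist (D : Set ℝ) : Prop :=
  D.Finite ∧ (0 : ℝ) ∈ D ∧ (∀ d ∈ D, 0 ≤ d) ∧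
    ∀ s x₀ y₀ x₁ y₁ : ℝ, s ∈ D → x₀ ∈ D → y₀ ∈ D → x₁ ∈ D → y₁ ∈ D →
      0 < x₀ → 0 < y₀ → 0 < x₁ → 0 < y₁ →
      IsMetricTriple x₀ y₀ s → IsMetricTriple x₁ y₁ s →
      ∃ t ∈ D, 0 < t ∧ IsMetricTriple x₀ x₁ t ∧ IsMetricTriple y₀ y₁ t

open Classical in
noncomputable def dsucc (D : Set ℝ) (r : ℝ) : ℝ :=
  if ({s | s ∈ D ∧ r < s}).Nonempty then sInf {s | s ∈ D ∧ r < s} else r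

noncomputable def dpred (D : Set ℝ) (r : ℝ) : ℝ := sSup {s | s ∈ D ∧ s < r}

def IsBlock (D B : Set ℝ) : Prop :=
  ∃ (n : ℕ) (b : ℕ → ℝ),
    B = {x | ∃ i, i ≤ n ∧ x = b i} ∧
    (∀ i ≤ n, b i ∈ D) ∧ 0 < b 0 ∧
    (∀ i < n, b i < b (i + 1)) ∧
    (∀ y ∈ D, y < b 0 → 2 * y < b 0) ∧
    (∀ i < n, b (i + 1) = dsucc D (b i)) ∧
    (∀ i < n, b (i + 1) ≤ b i + b 0)

def IsJump (D : Set ℝ) (r : ℝ) : Prop := r ∈ D ∧ ∀ s ∈ D, r < s → 2 * r < s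

structure Katetov (D : Set ℝ) (M : Type) [MetricSpace M] where
  dom : Finset M
  f : M → ℝ
  mem : ∀ x ∈ dom, f x ∈ D
  pos : ∀ x ∈ dom, 0 < f x
  ineq1 : ∀ x ∈ dom, ∀ y ∈ dom, |f x - f y| ≤ dist x y
  ineq2 : ∀ x ∈ dom, ∀ y ∈ dom, dist x y ≤ f x + f y

variable {D : Set ℝ} {M : Type} [MetricSpace M]

def orb (t : Katetov D M) : Set M :=
  {y | y ∉ t.dom ∧ ∀ x ∈ t.dom, dist y x = t.f x}

noncomputable def rank (t : Katetov D M) : ℝ := sInf (t.f '' ↑t.dom)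

def orbDistSet (s t : Katetov D M) : Set ℝ :=
  {m | ∃ x ∈ orb s, ∃ y ∈ orb t, dist x y = m}

noncomputable def dminK (s t : Katetov D M) : ℝ := sInf (orbDistSet s t)

noncomputable def dmin (A B : Set M) : ℝ := sInf {d | ∃ x ∈ A, ∃ y ∈ B, dist x y = d}

def IsHomogeneous (M : Type) [MetricSpace M] : Prop :=
  ∀ (A : Finset M) (f : M → M),
    (∀ x ∈ A, ∀ y ∈ A, dist (f x) (f y) = dist x y) →
    ∃ g : M ≃ᵢ M, ∀ x ∈ A, g x = f x

def IsUrysohn (D : Set ℝ) (M : Type) [MetricSpace M] : Prop :=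
  Countable M ∧ (∀ x y : M, dist x y ∈ D) ∧ IsHomogeneous M ∧
    ∀ (N : Type) [MetricSpace N], Finite N → (∀ x y : N, dist x y ∈ D) →
      ∃ f : N → M, Isometry f

/-!
Let `r = min S` and `q = r⁺`, and suppose `q ≤ 2r`. The largest `a ∈ D` below `q - r` satisfies
`m ≤ a < r`, so `a ∉ S` by minimality of `r`, i.e. `a⁺ ≤ m + a ≤ 2a`; maximality of `a` gives
`q - r ≤ a⁺`. Hence `{q, r, a⁺}` and `{a, a, a⁺}` are triangles sharing the side `a⁺`, and the
4-values condition yields `t ∈ D` with `q - a ≤ t ≤ r + a`, i.e. `r < t < q`, contradicting `q = r⁺`.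
-/

section dsucc

variable {r s : ℝ}

theorem dsucc_le (hfin : D.Finite) (hs : s ∈ D) (hrs : r < s) : dsucc D r ≤ s := by
  have hne : {x | x ∈ D ∧ r < x}.Nonempty := ⟨s, hs, hrs⟩
  rw [dsucc, if_pos hne]
  exact csInf_le (hfin.subset fun _ hx => hx.1).bddBelow ⟨hs, hrs⟩

theorem dsucc_mem_of_lt (hfin : D.Finite) (h : r < dsucc D r) : dsucc D r ∈ D := by
  by_cases hne : {x | x ∈ D ∧ r < x}.Nonempty
  · rw [dsucc, if_pos hne]
    exact (hne.csInf_mem (hfin.subset fun _ hx => hx.1)).1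
  · rw [dsucc, if_neg hne] at h
    exact absurd h (lt_irrefl r)

theorem lt_dsucc (hfin : D.Finite) (hs : s ∈ D) (hrs : r < s) : r < dsucc D r := by
  have hne : {x | x ∈ D ∧ r < x}.Nonempty := ⟨s, hs, hrs⟩
  rw [dsucc, if_pos hne]
  exact (hne.csInf_mem (hfin.subset fun _ hx => hx.1)).2

theorem le_dsucc_of_isGreatest (hfin : D.Finite) {a c : ℝ}
    (ha : IsGreatest {x | x ∈ D ∧ x < c} a) (hs : s ∈ D) (has : a < s) : c ≤ dsucc D a := by
  have hlt : a < dsucc D a := lt_dsucc hfin hs has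
  by_contra! hc
  exact (ha.2 ⟨dsucc_mem_of_lt hfin hlt, hc⟩).not_gt hlt

end dsucc

theorem IsUniversalDist.exists_mem_Ioo (hD : IsUniversalDist D) {q r a b : ℝ}
    (hq : q ∈ D) (hr : r ∈ D) (ha : a ∈ D) (hb : b ∈ D) (hr0 : 0 < r) (ha0 : 0 < a)
    (hqb : q ≤ r + b) (hbq : b ≤ q + r) (hba : b ≤ 2 * a) (haqr : a < q - r) :
    ∃ t ∈ D, t ∈ Set.Ioo r q := by
  obtain ⟨-, -, hnn, h4⟩ := hD
  have hb0 := hnn b hb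
  obtain ⟨t, htD, -, ⟨hqt, -, -⟩, -, -, hrt⟩ :=
    h4 b q r a a hb hq hr ha ha (by linarith) hr0 ha0 ha0
      ⟨hqb, by linarith, hbq⟩ ⟨by linarith, by linarith, by linarith⟩
  exact ⟨t, htD, by linarith, by linarith⟩

theorem statement1 (D : Set ℝ) (hD : IsUniversalDist D) (m : ℝ) (hm : m ∈ D)
    (hm0 : 0 < m) (S : Set ℝ) (hS : S = {r | r ∈ D ∧ m + r < dsucc D r})
    (hne : S.Nonempty) :
    sInf S ∈ S ∧ 2 * sInf S < dsucc D (sInf S) := by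
  subst hS
  have hfin := hD.1
  have hSfin : {r | r ∈ D ∧ m + r < dsucc D r}.Finite := hfin.subset fun _ hr => hr.1
  have hrS := hne.csInf_mem hSfin
  refine ⟨hrS, ?_⟩
  set r := sInf {r | r ∈ D ∧ m + r < dsucc D r}
  obtain ⟨hrD, hgap⟩ := hrS
  have hmin : ∀ a ∈ D, a < r → dsucc D a ≤ m + a := fun a ha har =>
    not_lt.1 fun h => (csInf_le hSfin.bddBelow ⟨ha, h⟩).not_gt har
  by_contra! hq
  set q := dsucc D r
  have hqD : q ∈ D := dsucc_mem_of_lt hfin (by linarith)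
  set A := {x | x ∈ D ∧ x < q - r}
  have hAfin : A.Finite := hfin.subset fun _ hx => hx.1
  have hAne : A.Nonempty := ⟨m, hm, by linarith⟩
  set a := sSup A
  have haA : IsGreatest A a := ⟨hAne.csSup_mem hAfin, fun _ hx => le_csSup hAfin.bddAbove hx⟩
  have hma : m ≤ a := haA.2 ⟨hm, by linarith⟩
  have har : a < r := by linarith [haA.1.2]
  have hapD : dsucc D a ∈ D := dsucc_mem_of_lt hfin (lt_dsucc hfin hrD har)
  have hqra : q - r ≤ dsucc D a := le_dsucc_of_isGreatest hfin haA hrD har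
  have ham := hmin a haA.1.1 har
  obtain ⟨t, htD, hrt, htq⟩ := hD.exists_mem_Ioo hqD hrD haA.1.1 hapD (by linarith)
    (by linarith) (by linarith) (by linarith) (by linarith) haA.1.2
  exact (dsucc_le hfin htD hrt).not_gt htq

end Sauer
end

section
/- Let D be a finite universal set of distances. Then D \ {0} is the union of pairwise disjoint blocks B₁, …, B_k such that: (1) every element of B_i is less than every element of B_{i+1}; (2) 2·max(B_i) < min(B_{i+1}); and (3) for every x ∈ B_i with x < max(B_i), x + min(B_i) ≥ x⁺ (the successor of x in D). -/
/-!
Call a positive `a ∈ D` a block start if every smaller element of `D` is less than `a / 2`;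
the blocks are the stretches of `D \ {0}` from one block start up to (excluding) the next.
If `x < c = x⁺` lie in the block of `a`, then `c ≤ 2 x`, since otherwise `c` would start a new
block. Universality pushes the bound `c ≤ x + y` down from `y = x` to `y = a`, one element of `D`
at a time: amalgamating the triangles `(x, c, y⁺)` and `(a, y, y⁺)` over the common side `y⁺`
gives a distance `t ∈ D` with `t ≤ x + a` and `c ≤ y + t`, and either `t ≤ x` or `t ≥ c`.
The triangle `(a, y, y⁺)` needs `y⁺ ≤ y + a`, which is the claim for `y < x`; so the whole
argument is an induction along `D`.
-/

namespace Sauer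

variable {D : Set ℝ} {M : Type} [MetricSpace M]

def IsBlockStart (D : Set ℝ) (a : ℝ) : Prop := a ∈ D ∧ 0 < a ∧ ∀ y ∈ D, y < a → 2 * y < a

lemma exists_monotone_enum {α : Type*} [LinearOrder α] (S : Finset α) (t : α)
    (ht : ∀ x ∈ S, x < t) :
    ∃ a : ℕ → α, Monotone a ∧ (∀ j < S.card, a j < a (j + 1)) ∧ (∀ j < S.card, a j ∈ S) ∧
      (∀ x ∈ S, ∃ j < S.card, a j = x) ∧ (∀ j, ∀ x ∈ S, a j < x → a (j + 1) ≤ x) ∧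
      a S.card = t := by
  set e := S.orderEmbOfFin rfl
  set a : ℕ → α := fun j => if h : j < S.card then e ⟨j, h⟩ else t with ha
  have hmem : ∀ j < S.card, a j ∈ S := fun j hj => by
    simp only [ha, dif_pos hj]
    exact S.orderEmbOfFin_mem rfl _
  have hsurj : ∀ x ∈ S, ∃ j < S.card, a j = x := fun x hx => by
    obtain ⟨j, rfl⟩ : x ∈ Set.range e := by rwa [Finset.range_orderEmbOfFin]
    exact ⟨j, j.isLt, by simp [ha]⟩
  have hlt : ∀ j < S.card, a j < a (j + 1) := by
    intro j hj
    by_cases hj' : j + 1 < S.card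
    · simp only [ha, dif_pos hj, dif_pos hj']
      exact e.strictMono (Fin.mk_lt_mk.2 (lt_add_one j))
    · simpa only [ha, dif_neg hj'] using ht _ (hmem j hj)
  have hmono : Monotone a := monotone_nat_of_le_succ fun j => by
    by_cases hj : j < S.card
    · exact (hlt j hj).le
    · simp only [ha, dif_neg hj, dif_neg (by omega : ¬ j + 1 < S.card), le_refl]
  refine ⟨a, hmono, hlt, hmem, hsurj, fun j x hx hjx => ?_, by simp [ha]⟩
  obtain ⟨l, -, rfl⟩ := hsurj x hx
  exact hmono (lt_of_not_ge fun h => (hmono h).not_gt hjx)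

lemma isLeast_dsucc (hD : D.Finite) {x z : ℝ} (hz : z ∈ D) (hxz : x < z) :
    IsLeast {s | s ∈ D ∧ x < s} (dsucc D x) := by
  have hne : {s | s ∈ D ∧ x < s}.Nonempty := ⟨z, hz, hxz⟩
  have hfin : {s | s ∈ D ∧ x < s}.Finite := hD.subset fun s hs => hs.1
  rw [dsucc, if_pos hne]
  exact ⟨hne.csInf_mem hfin, fun s hs => csInf_le hfin.bddBelow hs⟩

lemma exists_isBlockStart_le (hD : D.Finite) {x : ℝ} (hx : x ∈ D) (hx0 : 0 < x) :
    ∃ m, IsBlockStart D m ∧ m ≤ x := by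
  obtain ⟨m, ⟨hmD, hm0⟩, hm_min⟩ := Set.exists_min_image {y | y ∈ D ∧ 0 < y} id
    (hD.subset fun y hy => hy.1) ⟨x, hx, hx0⟩
  refine ⟨m, ⟨hmD, hm0, fun y hy hym => ?_⟩, hm_min x ⟨hx, hx0⟩⟩
  have : ¬ 0 < y := fun hy0 => (hm_min y ⟨hy, hy0⟩).not_gt hym
  linarith

namespace IsUniversalDist

lemma le_add_of_le_add_of_le_add (hD : IsUniversalDist D) {a y y' x c : ℝ} (ha : a ∈ D)
    (hy : y ∈ D) (hy' : y' ∈ D) (hx : x ∈ D) (ha0 : 0 < a) (hay : a ≤ y) (hyy' : y ≤ y')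
    (hy'x : y' ≤ x) (hy'y : y' ≤ y + a) (hc : IsLeast {s | s ∈ D ∧ x < s} c) (hcy' : c ≤ x + y') :
    c ≤ x + y := by
  obtain ⟨⟨hcD, hxc⟩, hc_min⟩ := hc
  obtain ⟨t, htD, -, htx, htc⟩ := hD.2.2.2 y' x c a y hy' hx hcD ha hy
    (by linarith) (by linarith) ha0 (by linarith)
    ⟨by linarith, hcy', by linarith⟩ ⟨by linarith, by linarith, by linarith⟩
  rcases le_or_gt t x with htx' | hxt
  · linarith [htc.1]
  · linarith [hc_min ⟨htD, hxt⟩, htx.2.2]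

lemma le_add_of_le_two_mul (hD : IsUniversalDist D) {a x c : ℝ} (ha : a ∈ D) (ha0 : 0 < a)
    (hx : x ∈ D) (hax : a ≤ x) (hc : IsLeast {s | s ∈ D ∧ x < s} c) (hc2 : c ≤ 2 * x)
    (hstep : ∀ y ∈ D, a ≤ y → y < x → dsucc D y ≤ y + a) : c ≤ x + a := by
  suffices ∀ y ∈ D, a ≤ y → y ≤ x → c ≤ x + y from this a ha le_rfl hax
  intro y hy
  refine (hD.1.wellFoundedOn (r := (· > ·))).induction hy
    (P := fun y => a ≤ y → y ≤ x → c ≤ x + y) fun y hy ih hay hyx => ?_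
  rcases hyx.eq_or_lt with rfl | hyx
  · linarith
  obtain ⟨⟨hy'D, hyy'⟩, hy'_min⟩ := isLeast_dsucc hD.1 hx hyx
  have hy'x : dsucc D y ≤ x := hy'_min ⟨hx, hyx⟩
  exact hD.le_add_of_le_add_of_le_add ha hy hy'D hx ha0 hay hyy'.le hy'x
    (hstep y hy hay hyx) hc (ih _ hy'D hyy' (hay.trans hyy'.le) hy'x)

lemma dsucc_le_add (hD : IsUniversalDist D) {a x y : ℝ} (ha : IsBlockStart D a) (hx : x ∈ D)
    (hy : y ∈ D) (hax : a ≤ x) (hxy : x < y) (hy_start : ∀ z, IsBlockStart D z → a < z → y < z) :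
    dsucc D x ≤ x + a := by
  refine (hD.1.wellFoundedOn (r := (· < ·))).induction hx
    (P := fun x => a ≤ x → x < y → dsucc D x ≤ x + a) (fun x hx ih hax hxy => ?_) hax hxy
  have hc := isLeast_dsucc hD.1 hy hxy
  obtain ⟨⟨hcD, hxc⟩, hc_min⟩ := id hc
  -- otherwise `x⁺` would itself be a block start inside `(a, y]`
  have hc2 : dsucc D x ≤ 2 * x := by
    by_contra! h
    have hstart : IsBlockStart D (dsucc D x) := by
      refine ⟨hcD, by linarith [ha.2.1], fun z hz hzc => ?_⟩
      have : z ≤ x := not_lt.1 fun hxz => (hc_min ⟨hz, hxz⟩).not_gt hzc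
      linarith
    exact (hc_min ⟨hy, hxy⟩).not_gt (hy_start _ hstart (hax.trans_lt hxc))
  exact hD.le_add_of_le_two_mul ha.1 ha.2.1 hx hax hc hc2
    fun z hz haz hzx => ih z hz hzx haz (hzx.trans hxy)

end IsUniversalDist

lemma isBlock_of (hD : D.Finite) {lo hi : ℝ} (hlo : IsBlockStart D lo)
    (hlohi : lo < hi)
    (hstep : ∀ x ∈ D, ∀ y ∈ D, lo ≤ x → x < y → y < hi → dsucc D x ≤ x + lo) :
    IsBlock D {x | x ∈ D ∧ lo ≤ x ∧ x < hi} := by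
  set B := {x | x ∈ D ∧ lo ≤ x ∧ x < hi}
  have hB : B.Finite := hD.subset fun x hx => hx.1
  obtain ⟨b, hmono, hlt, hmem, hsurj, hnext, -⟩ :=
    exists_monotone_enum hB.toFinset hi fun x hx => (hB.mem_toFinset.1 hx).2.2
  set N := hB.toFinset.card
  have hbB : ∀ i < N, b i ∈ B := fun i hi => hB.mem_toFinset.1 (hmem i hi)
  have hN : 0 < N := Finset.card_pos.2 ⟨lo, hB.mem_toFinset.2 ⟨hlo.1, le_rfl, hlohi⟩⟩
  have hb0 : b 0 = lo := by
    obtain ⟨j, -, hj⟩ := hsurj lo (hB.mem_toFinset.2 ⟨hlo.1, le_rfl, hlohi⟩)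
    exact le_antisymm (hj ▸ hmono (Nat.zero_le j)) (hbB 0 hN).2.1
  have hsucc : ∀ i < N - 1, b (i + 1) = dsucc D (b i) := by
    intro i hiN
    refine IsLeast.unique (s := {s | s ∈ D ∧ b i < s})
      ⟨⟨(hbB _ (by omega)).1, hlt i (by omega)⟩, ?_⟩
      (isLeast_dsucc hD (hbB _ (by omega)).1 (hlt i (by omega)))
    intro d ⟨hd, hid⟩
    rcases lt_or_ge d hi with hdhi | hdhi
    · exact hnext i d (hB.mem_toFinset.2 ⟨hd, (hbB i (by omega)).2.1.trans hid.le, hdhi⟩) hid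
    · exact ((hbB _ (by omega)).2.2.trans_le hdhi).le
  refine ⟨N - 1, b, ?_, fun i hi => (hbB i (by omega)).1, hb0 ▸ hlo.2.1,
    fun i hi => hlt i (by omega), hb0 ▸ hlo.2.2, hsucc, fun i hi => ?_⟩
  · ext x
    constructor
    · intro hx
      obtain ⟨j, hj, rfl⟩ := hsurj x (hB.mem_toFinset.2 hx)
      exact ⟨j, by omega, rfl⟩
    · rintro ⟨i, hi, rfl⟩
      exact hbB i (by omega)
  · rw [hsucc i hi, hb0]
    exact hstep _ (hbB i (by omega)).1 _ (hbB (i + 1) (by omega)).1 (hbB i (by omega)).2.1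
      (hlt i (by omega)) (hbB (i + 1) (by omega)).2.2

lemma sdiff_zero_eq_biUnion (hD : ∀ x ∈ D, 0 ≤ x) {a : ℕ → ℝ} {k : ℕ} (ha : ∀ j < k, 0 < a j)
    (hcover : ∀ x ∈ D, 0 < x → a 0 ≤ x ∧ x < a k) :
    D \ {0} = ⋃ j < k, {x | x ∈ D ∧ a j ≤ x ∧ x < a (j + 1)} := by
  ext x
  simp only [Set.mem_sdiff, Set.mem_singleton_iff, Set.mem_iUnion, exists_prop]
  constructor
  · rintro ⟨hx, hx0⟩
    obtain ⟨j, hj, hxj⟩ := Set.mem_iUnion₂.1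
      (Ico_subset_biUnion_Ico k a (hcover x hx ((hD x hx).lt_of_ne' hx0)))
    exact ⟨j, Finset.mem_range.1 hj, hx, hxj⟩
  · rintro ⟨j, hj, hx⟩
    exact ⟨hx.1, ((ha j hj).trans_le hx.2.1).ne'⟩

theorem statement2 (D : Set ℝ) (hD : IsUniversalDist D) :
    ∃ (k : ℕ) (B : ℕ → Set ℝ),
      (D \ {0} = ⋃ i < k, B i) ∧
      (∀ i < k, IsBlock D (B i)) ∧
      (∀ i j, i < j → j < k → ∀ x ∈ B i, ∀ y ∈ B j, x < y) ∧
      (∀ i j, i < k → j < k → i ≠ j → Disjoint (B i) (B j)) ∧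
      (∀ i, i + 1 < k → 2 * sSup (B i) < sInf (B (i + 1))) ∧
      (∀ i < k, ∀ x ∈ B i, x < sSup (B i) → dsucc D x ≤ x + sInf (B i)) := by
  have hfin : D.Finite := hD.1
  obtain ⟨M, hM⟩ := hfin.bddAbove
  have hS : {a | IsBlockStart D a}.Finite := hfin.subset fun a ha => ha.1
  obtain ⟨a, hmono, hlt, hmem, hsurj, hnext, htop⟩ :=
    exists_monotone_enum hS.toFinset (M + 1) fun z hz => by linarith [hM (hS.mem_toFinset.1 hz).1]
  set k := hS.toFinset.card
  have hstart : ∀ j < k, IsBlockStart D (a j) := fun j hj => hS.mem_toFinset.1 (hmem j hj)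
  set B : ℕ → Set ℝ := fun j => {x | x ∈ D ∧ a j ≤ x ∧ x < a (j + 1)}
  have hblock : ∀ j < k, ∀ x ∈ D, ∀ y ∈ D, a j ≤ x → x < y → y < a (j + 1) →
      dsucc D x ≤ x + a j := by
    intro j hj x hx y hy hax hxy hya
    exact hD.dsucc_le_add (hstart j hj) hx hy hax hxy
      fun z hz haz => hya.trans_le (hnext j z (hS.mem_toFinset.2 hz) haz)
  have hleast : ∀ j < k, IsLeast (B j) (a j) :=
    fun j hj => ⟨⟨(hstart j hj).1, le_rfl, hlt j hj⟩, fun x hx => hx.2.1⟩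
  have hsup : ∀ j < k, sSup (B j) ∈ B j :=
    fun j hj => Set.Nonempty.csSup_mem ⟨a j, (hleast j hj).1⟩ (hfin.subset fun x hx => hx.1)
  have horder : ∀ i j, i < j → ∀ x ∈ B i, ∀ y ∈ B j, x < y :=
    fun i j hij x hx y hy => hx.2.2.trans_le ((hmono hij).trans hy.2.1)
  refine ⟨k, B, ?_, fun j hj => isBlock_of hfin (hstart j hj) (hlt j hj) (hblock j hj),
    fun i j hij _ => horder i j hij, fun i j _ _ hij => ?_, fun i hi => ?_, fun i hi x hx hxs => ?_⟩
  · refine sdiff_zero_eq_biUnion hD.2.2.1 (fun j hj => (hstart j hj).2.1) fun x hx hx0 => ?_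
    obtain ⟨m, hm, hmx⟩ := exists_isBlockStart_le hfin hx hx0
    obtain ⟨l, -, rfl⟩ := hsurj m (hS.mem_toFinset.2 hm)
    exact ⟨(hmono (Nat.zero_le l)).trans hmx, htop ▸ by linarith [hM hx]⟩
  · refine Set.disjoint_left.2 fun x hxi hxj => hij.lt_or_gt.elim
      (fun h => (horder i j h x hxi x hxj).false) fun h => (horder j i h x hxj x hxi).false
  · rw [(hleast (i + 1) hi).csInf_eq]
    exact (hstart (i + 1) hi).2.2 _ (hsup i (by omega)).1 (hsup i (by omega)).2.2
  · rw [(hleast i hi).csInf_eq]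
    exact hblock i hi x hx.1 _ (hsup i hi).1 hx.2.1 hxs (hsup i hi).2.2

end Sauer
end

section
/- Let D be a finite universal distance set, M a countable Urysohn metric space with distance set D, and t a Katětov function of M with rank r = min{t(x) : x ∈ dom(t)}. Let D_t = {n ∈ D : n ≤ 2r}. Then the restriction of M to the orbit of t (the set of points realizing t) is isometric to the Urysohn space with distance set D_t; in particular, orb(t) is infinite. -/
/-!
A Katětov function `k` on the orbit of `t` with values at most `2r` glues with `t` to a
Katětov function on `M`, since an orbit point lies at distance `t a ≥ r` from every `a ∈ dom t`.
A point of `M` realizing the glued function lies in the orbit and realizes `k`, so the orbit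
realizes all its Katětov functions with distances in `D_t`; adding points one at a time then
embeds every finite metric space with distances in `D_t`. The orbit is infinite because
otherwise the constant function `r` on the whole orbit would be realized by a point of the orbit
outside it. Homogeneity is inherited from `M`: an isometry between finite subsets of the orbit,
extended by the identity on `dom t`, extends to an isometry of `M` which fixes `dom t` and hence
preserves the orbit.
-/

namespace Sauer

variable {D : Set ℝ} {M : Type} [MetricSpace M]

lemma rank_le (t : Katetov D M) {x : M} (hx : x ∈ t.dom) : rank t ≤ t.f x :=
  csInf_le (t.dom.finite_toSet.image t.f).bddBelow ⟨x, hx, rfl⟩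

lemma exists_eq_rank (t : Katetov D M) (hne : t.dom.Nonempty) :
    ∃ a ∈ t.dom, t.f a = rank t :=
  ((Finset.coe_nonempty.2 hne).image t.f).csInf_mem (t.dom.finite_toSet.image t.f)

lemma rank_pos (t : Katetov D M) (hne : t.dom.Nonempty) : 0 < rank t := by
  obtain ⟨a, ha, hfa⟩ := exists_eq_rank t hne
  exact hfa ▸ t.pos a ha

lemma rank_mem (t : Katetov D M) (hne : t.dom.Nonempty) : rank t ∈ D := by
  obtain ⟨a, ha, hfa⟩ := exists_eq_rank t hne
  exact hfa ▸ t.mem a ha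

lemma mem_orb_iff (t : Katetov D M) {y : M} : y ∈ orb t ↔ ∀ x ∈ t.dom, dist y x = t.f x :=
  ⟨And.right, fun h => ⟨fun hy => (t.pos y hy).ne' (by rw [← h y hy, dist_self]), h⟩⟩

lemma dist_le_two_mul_rank (t : Katetov D M) (hne : t.dom.Nonempty) {x y : M}
    (hx : x ∈ orb t) (hy : y ∈ orb t) : dist x y ≤ 2 * rank t := by
  obtain ⟨a, ha, hfa⟩ := exists_eq_rank t hne
  calc dist x y ≤ dist x a + dist y a := dist_triangle_right x y a
    _ = 2 * rank t := by rw [hx.2 a ha, hy.2 a ha, hfa]; ring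

lemma apply_mem_orb_iff (t : Katetov D M) {g : M ≃ᵢ M} (hg : ∀ x ∈ t.dom, g x = x) (y : M) :
    g y ∈ orb t ↔ y ∈ orb t := by
  simp only [mem_orb_iff]
  refine forall₂_congr fun x hx => ?_
  rw [← hg x hx, g.dist_eq, hg x hx]

namespace Katetov

abbrev Extension (s : Katetov D M) : Type := Option s.dom

variable (s : Katetov D M)

def extensionDist : s.Extension → s.Extension → ℝ
  | none, none => 0
  | none, some x => s.f x
  | some x, none => s.f x
  | some x, some y => dist x y

instance : MetricSpace s.Extension where
  dist := s.extensionDist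
  dist_self := by rintro (_ | x) <;> simp [extensionDist]
  dist_comm := by rintro (_ | x) (_ | y) <;> simp [extensionDist, dist_comm]
  dist_triangle := by
    have ineq1 := fun (x y : s.dom) => abs_sub_le_iff.1 (s.ineq1 x x.2 y y.2)
    rintro (_ | x) (_ | y) (_ | z) <;> simp only [extensionDist]
    · simp
    · simp
    · linarith [s.pos y y.2]
    · linarith [(ineq1 y z).2, Subtype.dist_eq y z]
    · simp
    · exact s.ineq2 x x.2 z z.2
    · linarith [(ineq1 x y).1, Subtype.dist_eq x y]
    · exact dist_triangle x y z
  eq_of_dist_eq_zero := by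
    rintro (_ | x) (_ | y) h <;> simp only [extensionDist] at h
    · rfl
    · exact absurd h (s.pos y y.2).ne'
    · exact absurd h (s.pos x x.2).ne'
    · rw [dist_eq_zero.1 h]

lemma extension_dist_mem (h0 : (0 : ℝ) ∈ D) (hM : ∀ x y : M, dist x y ∈ D)
    (x y : s.Extension) : dist x y ∈ D := by
  rcases x with _ | x <;> rcases y with _ | y
  exacts [h0, s.mem y y.2, s.mem x x.2, hM x y]

end Katetov

/-- Realize `s` by embedding its one-point extension and moving the embedded copy of `s.dom`
back onto `s.dom` by homogeneity. -/
theorem orb_nonempty_of_isUrysohn (h0 : (0 : ℝ) ∈ D) (hM : IsUrysohn D M) (s : Katetov D M) :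
    (orb s).Nonempty := by
  classical
  obtain ⟨ι, hι⟩ := hM.2.2.2 s.Extension inferInstance (s.extension_dist_mem h0 hM.2.1)
  let F : M → M := fun x => if h : x ∈ s.dom then ι (some ⟨x, h⟩) else x
  have hF : ∀ x (hx : x ∈ s.dom), F x = ι (some ⟨x, hx⟩) := fun x hx => dif_pos hx
  obtain ⟨g, hg⟩ := hM.2.2.1 s.dom F fun x hx y hy => by
    rw [hF x hx, hF y hy, hι.dist_eq]; rfl
  refine ⟨g.symm (ι none), (mem_orb_iff s).2 fun x hx => ?_⟩
  rw [← g.dist_eq, g.apply_symm_apply, hg x hx, hF x hx, hι.dist_eq]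
  rfl

lemma exists_katetov_image_of_isometricOn {N : Type} [MetricSpace N]
    (hN : ∀ x y : N, dist x y ∈ D) {F : N → M} {s : Finset N}
    (hF : ∀ x ∈ s, ∀ y ∈ s, dist (F x) (F y) = dist x y) {p : N} (hp : p ∉ s) :
    ∃ k : Katetov D M, (k.dom : Set M) = F '' s ∧ ∀ x ∈ s, k.f (F x) = dist p x := by
  classical
  have : Nonempty N := ⟨p⟩
  have hinv : Set.LeftInvOn (Function.invFunOn F s) F s :=
    Set.InjOn.leftInvOn_invFunOn fun x hx y hy h =>
      dist_eq_zero.1 (by rw [← hF x hx y hy, h, dist_self])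
  let f : M → ℝ := fun m => dist p (Function.invFunOn F s m)
  have hf : ∀ x ∈ s, f (F x) = dist p x := fun x hx => by simp only [f, hinv hx]
  refine ⟨{ dom := s.image F, f := f, mem := ?_, pos := ?_, ineq1 := ?_, ineq2 := ?_ },
    Finset.coe_image, hf⟩
  · simp only [Finset.forall_mem_image]
    exact fun x hx => hf x hx ▸ hN p x
  · simp only [Finset.forall_mem_image]
    exact fun x hx => hf x hx ▸ dist_pos.2 (ne_of_mem_of_not_mem hx hp).symm
  · simp only [Finset.forall_mem_image]
    intro x hx y hy
    rw [hf x hx, hf y hy, hF x hx y hy, dist_comm p x, dist_comm p y]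
    exact abs_dist_sub_le x y p
  · simp only [Finset.forall_mem_image]
    intro x hx y hy
    rw [hf x hx, hf y hy, hF x hx y hy, dist_comm p x]
    exact dist_triangle x p y

theorem exists_isometry_of_forall_orb_nonempty (hreal : ∀ k : Katetov D M, (orb k).Nonempty)
    (N : Type) [MetricSpace N] [Finite N] (hN : ∀ x y : N, dist x y ∈ D) :
    ∃ f : N → M, Isometry f := by
  classical
  have : Fintype N := Fintype.ofFinite N
  suffices ∀ s : Finset N, ∃ F : N → M, ∀ x ∈ s, ∀ y ∈ s, dist (F x) (F y) = dist x y by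
    obtain ⟨F, hF⟩ := this Finset.univ
    exact ⟨F, Isometry.of_dist_eq fun x y => hF x (Finset.mem_univ x) y (Finset.mem_univ y)⟩
  intro s
  induction s using Finset.induction_on with
  | empty =>
    obtain ⟨y, -⟩ := hreal ⟨∅, fun _ => 0, by simp, by simp, by simp, by simp⟩
    exact ⟨fun _ => y, by simp⟩
  | insert p s hp ih =>
    obtain ⟨F, hF⟩ := ih
    obtain ⟨k, hdom, hk⟩ := exists_katetov_image_of_isometricOn hN hF hp
    obtain ⟨y, hy⟩ := hreal k
    have hyF : ∀ x ∈ s, dist y (F x) = dist p x := fun x hx => by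
      rw [hy.2 _ (by rw [← Finset.mem_coe, hdom]; exact Set.mem_image_of_mem F hx), hk x hx]
    have hupd : ∀ x ∈ s, Function.update F p y x = F x := fun x hx =>
      Function.update_of_ne (ne_of_mem_of_not_mem hx hp) y F
    refine ⟨Function.update F p y, ?_⟩
    simp only [Finset.forall_mem_insert, Function.update_self, dist_self, true_and]
    refine ⟨fun x hx => ?_, fun x hx => ⟨?_, fun z hz => ?_⟩⟩
    · rw [hupd x hx, hyF x hx]
    · rw [hupd x hx, dist_comm, hyF x hx, dist_comm]
    · rw [hupd x hx, hupd z hz, hF x hx z hz]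

theorem isHomogeneous_orb (hM : IsHomogeneous M) (t : Katetov D M) : IsHomogeneous (orb t) := by
  classical
  intro A f hf
  let F : M → M := fun x => if h : x ∈ orb t then f ⟨x, h⟩ else x
  have hFA : ∀ a : orb t, F a = f a := fun a => dif_pos a.2
  have hFdom : ∀ x ∈ t.dom, F x = x := fun x hx => dif_neg fun h => h.1 hx
  have hFmixed : ∀ (a : orb t), ∀ x ∈ t.dom, dist (F a) (F x) = dist (a : M) x := fun a x hx => by
    rw [hFA, hFdom x hx, (f a).2.2 x hx, a.2.2 x hx]
  have hFiso : ∀ x ∈ t.dom ∪ A.image Subtype.val, ∀ y ∈ t.dom ∪ A.image Subtype.val,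
      dist (F x) (F y) = dist x y := by
    simp only [Finset.forall_mem_union, Finset.forall_mem_image]
    refine ⟨fun x hx => ⟨fun y hy => by rw [hFdom x hx, hFdom y hy], fun b _ => ?_⟩,
      fun a ha => ⟨fun y hy => hFmixed a y hy, fun b hb => ?_⟩⟩
    · rw [dist_comm, hFmixed b x hx, dist_comm]
    · rw [hFA, hFA, ← Subtype.dist_eq, hf a ha b hb, Subtype.dist_eq]
  obtain ⟨g, hg⟩ := hM _ F hFiso
  have hgdom : ∀ x ∈ t.dom, g x = x := fun x hx =>
    (hg x (Finset.mem_union_left _ hx)).trans (hFdom x hx)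
  refine ⟨{ toEquiv := g.toEquiv.subtypeEquiv fun y => (apply_mem_orb_iff t hgdom y).symm
            isometry_toFun := Isometry.of_dist_eq fun x y => g.dist_eq x y },
    fun a ha => Subtype.ext ?_⟩
  exact (hg a (Finset.mem_union_right _ (Finset.mem_image_of_mem _ ha))).trans (hFA a)

theorem infinite_of_forall_orb_nonempty (hreal : ∀ k : Katetov D M, (orb k).Nonempty)
    {d : ℝ} (hd : d ∈ D) (hd0 : 0 < d) (hdiam : ∀ x y : M, dist x y ≤ 2 * d) : Infinite M := by
  by_contra hfin
  have := not_infinite_iff_finite.1 hfin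
  have := Fintype.ofFinite M
  obtain ⟨y, hy, -⟩ := hreal ⟨Finset.univ, fun _ => d, fun _ _ => hd, fun _ _ => hd0,
    fun _ _ _ _ => by simp, fun x _ y _ => by linarith [hdiam x y]⟩
  exact hy (Finset.mem_univ y)

lemma exists_katetov_extend_orb (t : Katetov D M)
    (k : Katetov {n | n ∈ D ∧ n ≤ 2 * rank t} (orb t)) :
    ∃ s : Katetov D M, (∀ a ∈ t.dom, a ∈ s.dom ∧ s.f a = t.f a) ∧
      ∀ x ∈ k.dom, (x : M) ∈ s.dom ∧ s.f x = k.f x := by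
  classical
  let f : M → ℝ := fun x => if h : x ∈ orb t then k.f ⟨x, h⟩ else t.f x
  have hf_dom : ∀ a ∈ t.dom, f a = t.f a := fun a ha => dif_neg fun h => h.1 ha
  have hf_orb : ∀ x : orb t, f x = k.f x := fun x => dif_pos x.2
  -- an orbit point is at distance `t.f a` from `a`, and `0 < k.f x ≤ 2 * rank t ≤ 2 * t.f a`
  have hmixed : ∀ x ∈ k.dom, ∀ a ∈ t.dom,
      |f x - f a| ≤ dist (x : M) a ∧ dist (x : M) a ≤ f x + f a := fun x hx a ha => by
    have := rank_le t ha
    have := (k.mem x hx).2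
    have := k.pos x hx
    rw [hf_orb, hf_dom a ha, x.2.2 a ha, abs_sub_le_iff]
    exact ⟨⟨by linarith, by linarith⟩, by linarith⟩
  refine ⟨{ dom := t.dom ∪ k.dom.map (Function.Embedding.subtype _)
            f := f
            mem := ?_, pos := ?_, ineq1 := ?_, ineq2 := ?_ },
    fun a ha => ⟨Finset.mem_union_left _ ha, hf_dom a ha⟩,
    fun x hx => ⟨Finset.mem_union_right _ (Finset.mem_map_of_mem _ hx), hf_orb x⟩⟩ <;>
    simp only [Finset.forall_mem_union, Finset.forall_mem_map, Function.Embedding.subtype_apply]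
  · exact ⟨fun a ha => hf_dom a ha ▸ t.mem a ha, fun x hx => hf_orb x ▸ (k.mem x hx).1⟩
  · exact ⟨fun a ha => hf_dom a ha ▸ t.pos a ha, fun x hx => hf_orb x ▸ k.pos x hx⟩
  · refine ⟨fun a ha => ⟨fun b hb => ?_, fun y hy => ?_⟩,
      fun x hx => ⟨fun b hb => (hmixed x hx b hb).1, fun y hy => ?_⟩⟩
    · rw [hf_dom a ha, hf_dom b hb]; exact t.ineq1 a ha b hb
    · rw [abs_sub_comm, dist_comm]; exact (hmixed y hy a ha).1
    · rw [hf_orb, hf_orb, ← Subtype.dist_eq]; exact k.ineq1 x hx y hy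
  · refine ⟨fun a ha => ⟨fun b hb => ?_, fun y hy => ?_⟩,
      fun x hx => ⟨fun b hb => (hmixed x hx b hb).2, fun y hy => ?_⟩⟩
    · rw [hf_dom a ha, hf_dom b hb]; exact t.ineq2 a ha b hb
    · rw [add_comm, dist_comm]; exact (hmixed y hy a ha).2
    · rw [hf_orb, hf_orb, ← Subtype.dist_eq]; exact k.ineq2 x hx y hy

theorem orb_nonempty_of_katetov_orb (h0 : (0 : ℝ) ∈ D) (hM : IsUrysohn D M) (t : Katetov D M)
    (k : Katetov {n | n ∈ D ∧ n ≤ 2 * rank t} (orb t)) : (orb k).Nonempty := by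
  obtain ⟨s, hs_dom, hs_orb⟩ := exists_katetov_extend_orb t k
  obtain ⟨y, hy⟩ := orb_nonempty_of_isUrysohn h0 hM s
  have hyt : y ∈ orb t := (mem_orb_iff t).2 fun a ha =>
    (hy.2 a (hs_dom a ha).1).trans (hs_dom a ha).2
  exact ⟨⟨y, hyt⟩, (mem_orb_iff k).2 fun x hx => (hy.2 x (hs_orb x hx).1).trans (hs_orb x hx).2⟩

theorem statement3 (D : Set ℝ) (hD : IsUniversalDist D) (M : Type) [MetricSpace M]
    (hM : IsUrysohn D M) (t : Katetov D M) (hne : t.dom.Nonempty)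
    (r : ℝ) (hr : r = rank t) :
    IsUrysohn {n | n ∈ D ∧ n ≤ 2 * r} ↥(orb t) ∧ (orb t).Infinite := by
  subst hr
  have hreal := orb_nonempty_of_katetov_orb hD.2.1 hM t
  have hdist : ∀ x y : orb t, dist x y ∈ {n | n ∈ D ∧ n ≤ 2 * rank t} :=
    fun x y => ⟨hM.2.1 x y, dist_le_two_mul_rank t hne x.2 y.2⟩
  have : Countable M := hM.1
  refine ⟨⟨inferInstance, hdist, isHomogeneous_orb hM.2.2.1 t,
    fun N _ _ hN => exists_isometry_of_forall_orb_nonempty hreal N hN⟩, ?_⟩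
  have hr0 := rank_pos t hne
  rw [← Set.infinite_coe_iff]
  exact infinite_of_forall_orb_nonempty hreal ⟨rank_mem t hne, by linarith⟩ hr0
    fun x y => (hdist x y).2

end Sauer
end

section
/- Let M be a countable Urysohn metric space with finite distance set D, A ⊆ M finite, and s, t two Katětov functions with dom(s) = dom(t) = A. Then the set d(s,t) of distances d(x,y) realized by pairs x ∈ orb(s), y ∈ orb(t) equals {m ∈ D : max_{x∈A}|s(x) − t(x)| ≤ m ≤ min_{x∈A}(s(x) + t(x))}. -/
/-! The bounds `|s x - t x| ≤ d(u, v) ≤ s x + t x` for realizations `u` of `s` and `v` of `t` are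
the triangle inequality. Conversely, a Urysohn space realizes every Katětov function over a finite
set: embed the one-point extension by universality and move it back over the set by homogeneity.
Given `m` in the interval, realize `s` by a point `u`, then realize the Katětov function over
`A ∪ {u}` that is `t` on `A` and `m` at `u`; the bounds on `m` are exactly its Katětov
conditions at `u`. -/

namespace Sauer

variable {D : Set ℝ} {M : Type} [MetricSpace M]

section OnePointExtension

variable {X : Type*} [MetricSpace X]

def extensionDist (k : X → ℝ) : Option X → Option X → ℝ
  | none, none => 0
  | none, some y => k y
  | some x, none => k x
  | some x, some y => dist x y

abbrev onePointExtension (k : X → ℝ) (hpos : ∀ x, 0 < k x)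
    (habs : ∀ x y, |k x - k y| ≤ dist x y) (hle : ∀ x y, dist x y ≤ k x + k y) :
    MetricSpace (Option X) where
  dist := extensionDist k
  dist_self := by rintro (_ | x) <;> simp [extensionDist]
  dist_comm := by rintro (_ | x) (_ | y) <;> simp [extensionDist, dist_comm]
  dist_triangle := by
    rintro (_ | x) (_ | y) (_ | z) <;> simp only [extensionDist]
    · simp
    · simp
    · linarith [hpos y]
    · linarith [(abs_sub_le_iff.mp (habs z y)).1, dist_comm z y]
    · simp
    · exact hle x z
    · linarith [(abs_sub_le_iff.mp (habs x y)).1]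
    · exact dist_triangle x y z
  eq_of_dist_eq_zero := by
    rintro (_ | x) (_ | y) h <;> simp only [extensionDist] at h
    · rfl
    · exact absurd h (hpos y).ne'
    · exact absurd h (hpos x).ne'
    · rw [dist_eq_zero.mp h]

end OnePointExtension

theorem IsUrysohn.exists_isometry_extend (hM : IsUrysohn D M) {N : Type} [MetricSpace N]
    [Finite N] (hN : ∀ x y : N, dist x y ∈ D) (B : Finset M) (e : B → N) (he : Isometry e) :
    ∃ F : N → M, Isometry F ∧ ∀ b, F (e b) = b := by
  classical
  obtain ⟨f, hf⟩ := hM.2.2.2 N inferInstance hN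
  have hfe : Function.Injective (f ∘ e) := (hf.comp he).injective
  -- `φ` sends the embedded copy `f (e b)` of `b` back to `b`; homogeneity extends it.
  set φ : M → M := Function.extend (f ∘ e) Subtype.val id
  have hφ : ∀ b, φ (f (e b)) = b := fun b => hfe.extend_apply _ _ b
  obtain ⟨g, hg⟩ := hM.2.2.1 (Finset.univ.image (f ∘ e)) φ (by
    simp only [Finset.mem_image, Finset.mem_univ, true_and, Function.comp_apply]
    rintro _ ⟨a, rfl⟩ _ ⟨b, rfl⟩
    rw [hφ, hφ, hf.dist_eq, he.dist_eq, Subtype.dist_eq])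
  exact ⟨g ∘ f, g.isometry.comp hf, fun b =>
    (hg _ (Finset.mem_image_of_mem _ (Finset.mem_univ b))).trans (hφ b)⟩

structure IsKatetovOn (D : Set ℝ) (B : Finset M) (k : M → ℝ) : Prop where
  mem : ∀ x ∈ B, k x ∈ D
  pos : ∀ x ∈ B, 0 < k x
  abs_sub_le : ∀ x ∈ B, ∀ y ∈ B, |k x - k y| ≤ dist x y
  dist_le : ∀ x ∈ B, ∀ y ∈ B, dist x y ≤ k x + k y

theorem Katetov.isKatetovOn (t : Katetov D M) : IsKatetovOn D t.dom t.f :=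
  ⟨t.mem, t.pos, t.ineq1, t.ineq2⟩

theorem IsKatetovOn.insert_update [DecidableEq M] {B : Finset M} {k : M → ℝ}
    (hk : IsKatetovOn D B k) {x : M} (hx : x ∉ B) {r : ℝ} (hrD : r ∈ D) (hr : 0 < r)
    (habs : ∀ b ∈ B, |k b - r| ≤ dist b x) (hle : ∀ b ∈ B, dist b x ≤ k b + r) :
    IsKatetovOn D (insert x B) (Function.update k x r) := by
  have hk' : ∀ b ∈ B, Function.update k x r b = k b := fun b hb =>
    Function.update_of_ne (ne_of_mem_of_not_mem hb hx) _ _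
  refine ⟨?_, ?_, ?_, ?_⟩ <;> simp only [Finset.forall_mem_insert, Function.update_self]
  · exact ⟨hrD, fun b hb => hk' b hb ▸ hk.mem b hb⟩
  · exact ⟨hr, fun b hb => hk' b hb ▸ hk.pos b hb⟩
  · refine ⟨⟨by simp, fun b hb => ?_⟩, fun a ha => ⟨?_, fun b hb => ?_⟩⟩
    · rw [hk' b hb, abs_sub_comm, dist_comm]; exact habs b hb
    · rw [hk' a ha]; exact habs a ha
    · rw [hk' a ha, hk' b hb]; exact hk.abs_sub_le a ha b hb
  · refine ⟨⟨by simp [hr.le], fun b hb => ?_⟩, fun a ha => ⟨?_, fun b hb => ?_⟩⟩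
    · rw [hk' b hb, dist_comm, add_comm]; exact hle b hb
    · rw [hk' a ha]; exact hle a ha
    · rw [hk' a ha, hk' b hb]; exact hk.dist_le a ha b hb

theorem IsUrysohn.exists_realization (hD₀ : (0 : ℝ) ∈ D) (hM : IsUrysohn D M) {B : Finset M}
    {k : M → ℝ} (hk : IsKatetovOn D B k) : ∃ y, y ∉ B ∧ ∀ b ∈ B, dist y b = k b := by
  let _ : MetricSpace (Option B) := onePointExtension (fun b => k b)
    (fun b => hk.pos b b.2) (fun a b => hk.abs_sub_le a a.2 b b.2)
    (fun a b => hk.dist_le a a.2 b b.2)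
  have hN : ∀ x y : Option B, dist x y ∈ D := by
    rintro (_ | a) (_ | b)
    exacts [hD₀, hk.mem b b.2, hk.mem a a.2, hM.2.1 a b]
  obtain ⟨F, hF, hFe⟩ := hM.exists_isometry_extend hN B some (Isometry.of_dist_eq fun _ _ => rfl)
  have hdist : ∀ b ∈ B, dist (F none) b = k b := fun b hb => by
    calc dist (F none) b = dist (F none) (F (some ⟨b, hb⟩)) := by rw [hFe]
      _ = k b := hF.dist_eq _ _
  refine ⟨F none, fun hmem => ?_, hdist⟩
  have := hdist _ hmem
  rw [dist_self] at this
  exact (hk.pos _ hmem).ne' this.symm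

theorem abs_sub_le_dist_of_mem_orb {s t : Katetov D M} {x y a : M} (hx : x ∈ orb s)
    (hy : y ∈ orb t) (has : a ∈ s.dom) (hat : a ∈ t.dom) :
    |s.f a - t.f a| ≤ dist x y ∧ dist x y ≤ s.f a + t.f a := by
  rw [← hx.2 a has, ← hy.2 a hat]
  exact ⟨abs_dist_sub_le x y a, (dist_triangle x a y).trans_eq (by rw [dist_comm a y])⟩

theorem mem_orbDistSet_of_le (hD : IsUniversalDist D) (hM : IsUrysohn D M)
    {s t : Katetov D M} (hst : t.dom = s.dom) {m : ℝ} (hmD : m ∈ D)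
    (habs : ∀ a ∈ s.dom, |s.f a - t.f a| ≤ m) (hle : ∀ a ∈ s.dom, m ≤ s.f a + t.f a) :
    m ∈ orbDistSet s t := by
  classical
  obtain ⟨x, hxs, hx⟩ : (orb s).Nonempty := hM.exists_realization hD.2.1 s.isKatetovOn
  have hdist : ∀ a ∈ t.dom, dist a x = s.f a := fun a ha => by
    rw [dist_comm]; exact hx a (hst ▸ ha)
  have hxt : x ∉ t.dom := hst ▸ hxs
  -- Katětov functions are positive, so `m = 0` is separate: then `s = t` on the domain.
  rcases (hD.2.2.1 m hmD).eq_or_lt with rfl | hm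
  · refine ⟨x, ⟨hxs, hx⟩, x, ⟨hxt, fun a ha => ?_⟩, dist_self x⟩
    rw [dist_comm, hdist a ha, ← sub_eq_zero, ← abs_nonpos_iff]
    exact habs a (hst ▸ ha)
  · have habs' : ∀ a ∈ t.dom, |t.f a - m| ≤ dist a x := fun a ha => by
      have := abs_sub_le_iff.mp (habs a (hst ▸ ha))
      rw [hdist a ha, abs_sub_le_iff]
      constructor <;> linarith [hle a (hst ▸ ha)]
    have hle' : ∀ a ∈ t.dom, dist a x ≤ t.f a + m := fun a ha => by
      rw [hdist a ha]
      linarith [(abs_sub_le_iff.mp (habs a (hst ▸ ha))).1]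
    obtain ⟨y, hy, hyx⟩ := hM.exists_realization hD.2.1
      (t.isKatetovOn.insert_update hxt hmD hm habs' hle')
    rw [Finset.mem_insert, not_or] at hy
    rw [Finset.forall_mem_insert, Function.update_self] at hyx
    refine ⟨x, ⟨hxs, hx⟩, y, ⟨hy.2, fun a ha => ?_⟩, by rw [dist_comm, hyx.1]⟩
    rw [hyx.2 a ha, Function.update_of_ne (ne_of_mem_of_not_mem ha hxt)]

theorem statement6 (D : Set ℝ) (hD : IsUniversalDist D) (M : Type) [MetricSpace M]
    (hM : IsUrysohn D M) (A : Finset M) (s t : Katetov D M)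
    (hs : s.dom = A) (ht : t.dom = A) :
    orbDistSet s t =
      {m | m ∈ D ∧ (∀ x ∈ A, |s.f x - t.f x| ≤ m) ∧ ∀ x ∈ A, m ≤ s.f x + t.f x} := by
  subst hs
  ext m
  refine ⟨?_, fun ⟨hmD, habs, hle⟩ => mem_orbDistSet_of_le hD hM ht hmD habs hle⟩
  rintro ⟨x, hx, y, hy, rfl⟩
  exact ⟨hM.2.1 x y, fun a ha => (abs_sub_le_dist_of_mem_orb hx hy ha (ht ▸ ha)).1,
    fun a ha => (abs_sub_le_dist_of_mem_orb hx hy ha (ht ▸ ha)).2⟩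

end Sauer
end

section
/- Let M be a countable Urysohn metric space with finite distance set D and s a Katětov function of M. Then the set of distances realized between two (distinct) points of orb(s) is exactly {n ∈ D : 0 < n ≤ 2·rank(s)}, together with 0 for equal points. -/
namespace Sauer

variable {D : Set ℝ} {M : Type} [MetricSpace M]

/-!
Two realizations `x, y` of `s` satisfy `d(x, y) ≤ d(x, z) + d(z, y) = 2 s(z)`, and choosing `z`
with `s(z) = rank s` gives the upper bound. Conversely, for `n ∈ D` with `0 < n ≤ 2 rank s`,
adjoining to `dom s` two points that both realize `s` and lie at distance `n` from each other
gives a finite metric space with distances in `D`. Universality embeds it in `M`, and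
homogeneity moves the embedded copy of `dom s` back onto `dom s`, carrying the two new points
into `orb s`.
-/

namespace Katetov

variable (s : Katetov D M)

theorem notMem_dom_of_dist_eq {y : M} (hy : ∀ x ∈ s.dom, dist y x = s.f x) : y ∉ s.dom :=
  fun hmem => (s.pos y hmem).ne' (by rw [← hy y hmem, dist_self])

theorem rank_le {z : M} (hz : z ∈ s.dom) : rank s ≤ s.f z :=
  csInf_le (s.dom.finite_toSet.image s.f).bddBelow ⟨z, hz, rfl⟩

theorem exists_f_eq_rank (hne : s.dom.Nonempty) : ∃ z ∈ s.dom, s.f z = rank s :=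
  ((Finset.coe_nonempty.mpr hne).image s.f).csInf_mem (s.dom.finite_toSet.image s.f)

theorem dist_le_two_mul_of_mem_orb {x y : M} (hx : x ∈ orb s) (hy : y ∈ orb s) {z : M}
    (hz : z ∈ s.dom) : dist x y ≤ 2 * s.f z := by
  calc dist x y ≤ dist x z + dist y z := dist_triangle_right x y z
    _ = 2 * s.f z := by rw [hx.2 z hz, hy.2 z hz]; ring

noncomputable def pairExtDist (n : ℝ) : s.dom ⊕ Bool → s.dom ⊕ Bool → ℝ
  | .inl z, .inl w => dist z.1 w.1
  | .inl z, .inr _ => s.f z.1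
  | .inr _, .inl w => s.f w.1
  | .inr a, .inr b => if a = b then 0 else n

variable {s} {n : ℝ}

theorem pairExtDist_comm (a b : s.dom ⊕ Bool) : s.pairExtDist n a b = s.pairExtDist n b a := by
  rcases a with z | a <;> rcases b with w | b
  · exact dist_comm z.1 w.1
  · rfl
  · rfl
  · simp only [pairExtDist, eq_comm]

theorem pairExtDist_triangle (hn0 : 0 ≤ n) (hnr : ∀ z ∈ s.dom, n ≤ 2 * s.f z)
    (a b c : s.dom ⊕ Bool) :
    s.pairExtDist n a c ≤ s.pairExtDist n a b + s.pairExtDist n b c := by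
  rcases a with a | u <;> rcases b with b | v <;> rcases c with c | w <;>
    simp only [pairExtDist]
  · exact dist_triangle a.1 b.1 c.1
  · linarith [(abs_le.mp (s.ineq1 a.1 a.2 b.1 b.2)).2]
  · exact s.ineq2 a.1 a.2 c.1 c.2
  · split_ifs <;> linarith [s.pos a.1 a.2]
  · linarith [(abs_le.mp (s.ineq1 b.1 b.2 c.1 c.2)).1]
  · split_ifs <;> linarith [s.pos b.1 b.2, hnr b.1 b.2]
  · split_ifs <;> linarith [s.pos c.1 c.2]
  · split_ifs <;> first | linarith | simp_all

noncomputable abbrev pairExt (hn0 : 0 < n) (hnr : ∀ z ∈ s.dom, n ≤ 2 * s.f z) :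
    MetricSpace (s.dom ⊕ Bool) where
  dist := s.pairExtDist n
  dist_self := by
    rintro (z | a)
    · exact dist_self z.1
    · simp [pairExtDist]
  dist_comm := pairExtDist_comm
  dist_triangle := pairExtDist_triangle hn0.le hnr
  eq_of_dist_eq_zero := by
    rintro (z | a) (w | b) h
    · exact congrArg Sum.inl (Subtype.ext (eq_of_dist_eq_zero h))
    · exact absurd h (s.pos z.1 z.2).ne'
    · exact absurd h (s.pos w.1 w.2).ne'
    · simp only [pairExtDist] at h
      split_ifs at h with hab
      · exact congrArg Sum.inr hab
      · exact absurd h hn0.ne'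

end Katetov

theorem IsHomogeneous.exists_isometryEquiv_apply_eq (hM : IsHomogeneous M) {ι : Type*}
    [Fintype ι] (e p : ι → M) (hep : ∀ i j, dist (p i) (p j) = dist (e i) (e j)) :
    ∃ G : M ≃ᵢ M, ∀ i, G (e i) = p i := by
  classical
  have hfac : p.FactorsThrough e := fun i j hij =>
    dist_eq_zero.mp (by rw [hep, hij, dist_self])
  obtain ⟨G, hG⟩ := hM (Finset.univ.image e) (Function.extend e p id) (by
    simp only [Finset.mem_image, Finset.mem_univ, true_and, forall_exists_index,
      forall_apply_eq_imp_iff]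
    intro i j
    rw [hfac.extend_apply, hfac.extend_apply, hep])
  exact ⟨G, fun i => by rw [hG _ (Finset.mem_image_of_mem e (Finset.mem_univ i)),
    hfac.extend_apply]⟩

theorem IsUrysohn.exists_mem_orb_pair_dist_eq (hD0 : (0 : ℝ) ∈ D) (hM : IsUrysohn D M)
    (s : Katetov D M) {n : ℝ} (hnD : n ∈ D) (hn0 : 0 < n) (hnr : ∀ z ∈ s.dom, n ≤ 2 * s.f z) :
    ∃ x ∈ orb s, ∃ y ∈ orb s, x ≠ y ∧ dist x y = n := by
  let := s.pairExt hn0 hnr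
  have hdistD : ∀ a b : s.dom ⊕ Bool, dist a b ∈ D := by
    rintro (z | a) (w | b)
    · exact hM.2.1 z.1 w.1
    · exact s.mem z.1 z.2
    · exact s.mem w.1 w.2
    · change (if a = b then 0 else n) ∈ D
      split_ifs
      exacts [hD0, hnD]
  obtain ⟨f, hf⟩ := hM.2.2.2 _ inferInstance hdistD
  obtain ⟨G, hG⟩ := IsHomogeneous.exists_isometryEquiv_apply_eq hM.2.2.1
    (fun z => f (.inl z)) Subtype.val fun z w => by rw [hf.dist_eq]; rfl
  have hdist : ∀ a b, dist (G (f a)) (G (f b)) = s.pairExtDist n a b := fun a b => by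
    rw [G.dist_eq, hf.dist_eq]; rfl
  have hrealize : ∀ a : Bool, G (f (.inr a)) ∈ orb s := fun a => by
    have hy : ∀ z ∈ s.dom, dist (G (f (.inr a))) z = s.f z := fun z hz => by
      simpa [hG ⟨z, hz⟩, Katetov.pairExtDist] using hdist (.inr a) (.inl ⟨z, hz⟩)
    exact ⟨s.notMem_dom_of_dist_eq hy, hy⟩
  refine ⟨_, hrealize true, _, hrealize false, fun h => ?_, hdist _ _⟩
  simpa using hf.injective (G.injective h)

theorem statement7 (D : Set ℝ) (hD : IsUniversalDist D) (M : Type) [MetricSpace M]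
    (hM : IsUrysohn D M) (s : Katetov D M) (hne : s.dom.Nonempty) :
    {m | ∃ x ∈ orb s, ∃ y ∈ orb s, x ≠ y ∧ dist x y = m}
      = {n | n ∈ D ∧ 0 < n ∧ n ≤ 2 * rank s} := by
  obtain ⟨z₀, hz₀, hz₀rank⟩ := s.exists_f_eq_rank hne
  ext m
  constructor
  · rintro ⟨x, hx, y, hy, hxy, rfl⟩
    exact ⟨hM.2.1 x y, dist_pos.mpr hxy, hz₀rank ▸ s.dist_le_two_mul_of_mem_orb hx hy hz₀⟩
  · rintro ⟨hmD, hm0, hmr⟩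
    exact hM.exists_mem_orb_pair_dist_eq hD.2.1 s hmD hm0 fun z hz => by
      linarith [s.rank_le hz]

end Sauer
end

section
/- Let r be a jump number of D, M the countable Urysohn space with distance set D, and A ≠ B two equivalence classes of the relation x ~ y iff d(x,y) ≤ r. Then: (1) every distance between a point of A and a point of B exceeds 2r; (2) for every a ∈ A and every n in the set d(A,B) of realized A–B distances, there exists b ∈ B with d(a,b) = n; (3) max d(A,B) − min d(A,B) ≤ r. -/
namespace Sauer

variable {D : Set ℝ} {M : Type} [MetricSpace M]

/-! Every distance of `M` lies in `D`, and `D` has no value in `(r, 2r]`, so `dist x y ≤ r` is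
transitive: points of different classes are more than `2r` apart. Given `n = d(x', y')` with
`x ~ x'`, the one-point extension property of `M` realizes the Katětov function `x ↦ n, y' ↦ r`
by a point `y ~ y'` with `d(x, y) = n`. Finally, if `d(x, y)` is the largest distance between the
classes, realizing the smallest one from `x` by some `y'` gives
`max ≤ d(x, y') + d(y', y) ≤ min + r`. -/

namespace Katetov

/-- The finite metric space `t.dom ∪ {none}`, in which the new point `none` has distance `t.f x`
to each `x ∈ t.dom`. -/
def Ext (t : Katetov D M) : Type := Option t.dom

def extDist (t : Katetov D M) : Option t.dom → Option t.dom → ℝ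
  | some u, some v => dist (u : M) v
  | some u, none => t.f u
  | none, some v => t.f v
  | none, none => 0

instance (t : Katetov D M) : Finite t.Ext := inferInstanceAs (Finite (Option t.dom))

instance (t : Katetov D M) : MetricSpace t.Ext where
  dist := t.extDist
  dist_self x := by cases x <;> simp [extDist]
  dist_comm x y := by cases x <;> cases y <;> simp [extDist, dist_comm]
  dist_triangle x y z := by
    rcases x with _ | ⟨u, hu⟩ <;> rcases y with _ | ⟨v, hv⟩ <;> rcases z with _ | ⟨w, hw⟩ <;>
      simp only [extDist]
    · norm_num
    · linarith [t.pos w hw]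
    · linarith [t.pos v hv]
    · linarith [abs_le.mp (t.ineq1 v hv w hw)]
    · linarith [t.pos u hu]
    · exact t.ineq2 u hu w hw
    · linarith [abs_le.mp (t.ineq1 u hu v hv)]
    · exact dist_triangle u v w
  eq_of_dist_eq_zero {x y} h := by
    rcases x with _ | ⟨u, hu⟩ <;> rcases y with _ | ⟨v, hv⟩ <;> simp only [extDist] at h
    · rfl
    · exact absurd h (t.pos v hv).ne'
    · exact absurd h (t.pos u hu).ne'
    · exact congrArg some (Subtype.ext (eq_of_dist_eq_zero h))

end Katetov

theorem IsUrysohn.exists_dist_eq (hD0 : (0 : ℝ) ∈ D) (hM : IsUrysohn D M) (t : Katetov D M) :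
    ∃ y : M, ∀ x ∈ t.dom, dist y x = t.f x := by
  classical
  obtain ⟨φ, hφ⟩ := hM.2.2.2 t.Ext inferInstance <| by
    rintro (_ | ⟨u, hu⟩) (_ | ⟨v, hv⟩)
    exacts [hD0, t.mem v hv, t.mem u hu, hM.2.1 u v]
  let φ' : t.dom → M := fun u => φ (some u)
  have hφ' : Function.Injective φ' := hφ.injective.comp (Option.some_injective _)
  -- Homogeneity moves the embedded copy of `t.dom` back onto `t.dom` itself.
  let back : M → M := Function.extend φ' Subtype.val id
  have hback (u : t.dom) : back (φ' u) = u := hφ'.extend_apply _ _ u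
  obtain ⟨g, hg⟩ := hM.2.2.1 (Finset.univ.image φ') back <| by
    simp only [Finset.mem_image, Finset.mem_univ, true_and]
    rintro _ ⟨u, rfl⟩ _ ⟨v, rfl⟩
    rw [hback, hback]
    exact (hφ.dist_eq (some u) (some v)).symm
  refine ⟨g (φ none), fun x hx => ?_⟩
  have hgx : g (φ' ⟨x, hx⟩) = x := by
    rw [hg _ (Finset.mem_image_of_mem _ (Finset.mem_univ _)), hback]
  calc dist (g (φ none)) x = dist (g (φ none)) (g (φ' ⟨x, hx⟩)) := by rw [hgx]
    _ = dist (φ none) (φ (some ⟨x, hx⟩)) := g.dist_eq _ _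
    _ = t.f x := hφ.dist_eq _ _

theorem IsUrysohn.exists_dist_eq_pair (hD0 : (0 : ℝ) ∈ D) (hM : IsUrysohn D M) {p q : M}
    (hpq : p ≠ q) {s t : ℝ} (hs : s ∈ D) (ht : t ∈ D) (hs0 : 0 < s) (ht0 : 0 < t)
    (hlow : |s - t| ≤ dist p q) (hup : dist p q ≤ s + t) :
    ∃ y : M, dist y p = s ∧ dist y q = t := by
  classical
  obtain ⟨y, hy⟩ := hM.exists_dist_eq hD0
    { dom := {p, q}
      f := fun u => if u = p then s else t
      mem := by simp [hpq.symm, hs, ht]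
      pos := by simp [hpq.symm, hs0, ht0]
      ineq1 := by
        simpa [hpq.symm, dist_comm q p] using ⟨hlow, abs_sub_comm t s ▸ hlow⟩
      ineq2 := by
        simpa [hpq.symm, dist_comm q p] using ⟨⟨hs0.le, hup⟩, add_comm s t ▸ hup, ht0.le⟩ }
  exact ⟨y, by simpa using hy p, by simpa [hpq.symm] using hy q⟩

theorem IsUrysohn.exists_dist_eq_of_dist_le (hD0 : (0 : ℝ) ∈ D) (hM : IsUrysohn D M) {r : ℝ}
    (hr : r ∈ D) {x x' y' : M} (hxx' : dist x x' ≤ r) (hn : r < dist x' y') :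
    ∃ y, dist x y = dist x' y' ∧ dist y y' ≤ r := by
  rcases eq_or_ne x x' with rfl | hne
  · exact ⟨y', rfl, by simpa using dist_nonneg.trans hxx'⟩
  have hr0 : 0 < r := (dist_pos.mpr hne).trans_le hxx'
  have hlow := dist_triangle x' x y'
  have hup := dist_triangle x x' y'
  rw [dist_comm x' x] at hlow
  have hxy' : x ≠ y' := by
    rintro rfl
    linarith [dist_self x]
  obtain ⟨y, hyx, hyy'⟩ := hM.exists_dist_eq_pair hD0 hxy' (hM.2.1 x' y') hr (hr0.trans hn) hr0
    (abs_le.mpr ⟨by linarith, by linarith⟩) (by linarith)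
  exact ⟨y, by rw [dist_comm, hyx], hyy'.le⟩

namespace IsJump

variable {r : ℝ}

theorem dist_le_of_le_two_mul (hr : IsJump D r) (hdist : ∀ x y : M, dist x y ∈ D) {x y : M}
    (h : dist x y ≤ 2 * r) : dist x y ≤ r :=
  not_lt.mp fun hlt => (hr.2 _ (hdist x y) hlt).not_ge h

theorem dist_le_trans (hr : IsJump D r) (hdist : ∀ x y : M, dist x y ∈ D) {x y z : M}
    (hxy : dist x y ≤ r) (hyz : dist y z ≤ r) : dist x z ≤ r :=
  hr.dist_le_of_le_two_mul hdist <| by linarith [dist_triangle x y z]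

theorem two_mul_lt_dist (hr : IsJump D r) (hdist : ∀ x y : M, dist x y ∈ D) {a b x y : M}
    (hab : r < dist a b) (hx : dist x a ≤ r) (hy : dist y b ≤ r) : 2 * r < dist x y := by
  by_contra! h
  have hxy := hr.dist_le_of_le_two_mul hdist h
  have hay := hr.dist_le_trans hdist (dist_comm a x ▸ hx) hxy
  exact hab.not_ge (hr.dist_le_trans hdist hay hy)

end IsJump

theorem csSup_sub_csInf_le_of_forall_exists_dist_eq {A B : Set M} {S : Set ℝ} {r : ℝ}
    (hfin : S.Finite) (hne : S.Nonempty) (hS : S ⊆ {d | ∃ x ∈ A, ∃ y ∈ B, dist x y = d})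
    (hB : ∀ y ∈ B, ∀ y' ∈ B, dist y y' ≤ r) (hreal : ∀ x ∈ A, ∀ n ∈ S, ∃ y ∈ B, dist x y = n) :
    sSup S - sInf S ≤ r := by
  obtain ⟨x, hx, y, hy, hsup⟩ := hS (hne.csSup_mem hfin)
  obtain ⟨y', hy', hinf⟩ := hreal x hx _ (hne.csInf_mem hfin)
  rw [← hsup, ← hinf]
  linarith [dist_triangle x y' y, hB y' hy' y hy]

theorem statement9 (D : Set ℝ) (hD : IsUniversalDist D) (M : Type) [MetricSpace M]
    (hM : IsUrysohn D M) (r : ℝ) (hr : IsJump D r) (a b : M) (hab : r < dist a b)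
    (A B : Set M) (hA : A = {x | dist x a ≤ r}) (hB : B = {x | dist x b ≤ r})
    (dAB : Set ℝ) (hdAB : dAB = {d | ∃ x ∈ A, ∃ y ∈ B, dist x y = d}) :
    (∀ x ∈ A, ∀ y ∈ B, 2 * r < dist x y) ∧
    (∀ x ∈ A, ∀ n ∈ dAB, ∃ y ∈ B, dist x y = n) ∧
    sSup dAB - sInf dAB ≤ r := by
  obtain ⟨hDfin, hD0, hDnn, -⟩ := hD
  have hdist : ∀ x y : M, dist x y ∈ D := hM.2.1
  have hr0 : 0 ≤ r := hDnn r hr.1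
  have memA (x : M) : x ∈ A ↔ dist x a ≤ r := by rw [hA]; rfl
  have memB (y : M) : y ∈ B ↔ dist y b ≤ r := by rw [hB]; rfl
  have hsep : ∀ x ∈ A, ∀ y ∈ B, 2 * r < dist x y := fun x hx y hy =>
    hr.two_mul_lt_dist hdist hab ((memA x).1 hx) ((memB y).1 hy)
  have hreal : ∀ x ∈ A, ∀ n ∈ dAB, ∃ y ∈ B, dist x y = n := by
    rintro x hx n hn
    obtain ⟨x', hx', y', hy', rfl⟩ := hdAB ▸ hn
    obtain ⟨y, hxy, hyy'⟩ := hM.exists_dist_eq_of_dist_le hD0 hr.1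
      (hr.dist_le_trans hdist ((memA x).1 hx) ((dist_comm a x').trans_le ((memA x').1 hx')))
      (by linarith [hsep x' hx' y' hy'])
    exact ⟨y, (memB y).2 (hr.dist_le_trans hdist hyy' ((memB y').1 hy')), hxy⟩
  have hdiamB : ∀ y ∈ B, ∀ y' ∈ B, dist y y' ≤ r := fun y hy y' hy' =>
    hr.dist_le_trans hdist ((memB y).1 hy) ((dist_comm b y').trans_le ((memB y').1 hy'))
  have hne : dAB.Nonempty :=
    ⟨dist a b, hdAB ▸ ⟨a, (memA a).2 (by simpa using hr0), b, (memB b).2 (by simpa using hr0), rfl⟩⟩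
  have hfin : dAB.Finite := hDfin.subset (by rw [hdAB]; rintro _ ⟨x, -, y, -, rfl⟩; exact hdist x y)
  exact ⟨hsep, hreal, csSup_sub_csInf_le_of_forall_exists_dist_eq hfin hne hdAB.subset hdiamB hreal⟩

end Sauer
end

section
/- Let r be a jump number of D and M the countable Urysohn space with distance set D. Define d_min(A,B) = min{d(a,b) : a ∈ A, b ∈ B} for ~-equivalence classes A, B (where x ~ y iff d(x,y) ≤ r). Then d_min satisfies the triangle inequality on the quotient M/~: for all classes A, B, C, d_min(A,B) + d_min(A,C) ≥ d_min(B,C). -/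
namespace Sauer

variable {D : Set ℝ} {M : Type} [MetricSpace M]

/-!
Since `r` is a jump of `D`, two points at distance `≤ r` from a common point are at distance
`≤ 2r`, hence `≤ r`: so the closed `r`-balls are the `~`-classes. Let `A, B, C` be the classes
of `a, b, c`, with `A ≠ C`, and let `x, x' ∈ A`, `y ∈ B`, `z ∈ C`. The triangle with sides
`dist x z`, `dist x' z`, `r` is a metric triangle with sides in `D`, so it embeds into `M`, and
homogeneity moves its first side onto `(x, z)`: this gives `w ~ z` with `dist x w = dist x' z`.
Hence `dmin B C ≤ dist y w ≤ dist y x + dist x' z`, and taking infima gives the claim.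
-/

open Metric

def triangleDist (a b c : ℝ) : Fin 3 → Fin 3 → ℝ :=
  ![![0, a, b], ![a, 0, c], ![b, c, 0]]

abbrev triangleSpace (a b c : ℝ) (ha : 0 < a) (hb : 0 < b) (hc : 0 < c)
    (h : IsMetricTriple a b c) : MetricSpace (Fin 3) where
  dist := triangleDist a b c
  dist_self i := by fin_cases i <;> rfl
  dist_comm i j := by fin_cases i <;> fin_cases j <;> rfl
  dist_triangle i j k := by
    obtain ⟨h₁, h₂, h₃⟩ := h
    fin_cases i <;> fin_cases j <;> fin_cases k <;> simp [triangleDist] <;> linarith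
  eq_of_dist_eq_zero {i j} hij := by
    fin_cases i <;> fin_cases j <;> simp_all [triangleDist]

section Urysohn

variable {D : Set ℝ} {M : Type} [MetricSpace M]

theorem IsHomogeneous.exists_isometryEquiv_apply_eq_s10 (hM : IsHomogeneous M) {p q x z : M}
    (h : dist p q = dist x z) : ∃ g : M ≃ᵢ M, g p = x ∧ g q = z := by
  classical
  obtain ⟨g, hg⟩ := hM {p, q} (fun m => if m = p then x else z) (by
    simp only [Finset.mem_insert, Finset.mem_singleton]
    rintro u (rfl | rfl) v (rfl | rfl) <;> split_ifs <;> simp_all [dist_comm])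
  refine ⟨g, by simpa using hg p (by simp), ?_⟩
  rw [hg q (by simp)]
  split_ifs with hqp
  · rw [hqp, dist_self, eq_comm, dist_eq_zero] at h
    exact h
  · rfl

theorem IsUrysohn.exists_dist_eq_dist_eq (hM : IsUrysohn D M) {x z : M} {b c : ℝ}
    (hxz : x ≠ z) (hb : b ∈ D) (hc : c ∈ D) (hb0 : 0 < b) (hc0 : 0 < c)
    (h : IsMetricTriple (dist x z) b c) : ∃ w, dist x w = b ∧ dist z w = c := by
  obtain ⟨-, hMD, hMhom, hMuniv⟩ := hM
  let := triangleSpace (dist x z) b c (dist_pos.2 hxz) hb0 hc0 h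
  have h0 : (0 : ℝ) ∈ D := dist_self x ▸ hMD x x
  obtain ⟨φ, hφ⟩ := hMuniv (Fin 3) inferInstance fun i j => by
    change triangleDist _ _ _ i j ∈ D
    fin_cases i <;> fin_cases j <;> simp [triangleDist, h0, hb, hc, hMD]
  obtain ⟨g, hg₀, hg₁⟩ := hMhom.exists_isometryEquiv_apply_eq_s10
    (p := φ 0) (q := φ 1) (x := x) (z := z) (hφ.dist_eq 0 1)
  refine ⟨g (φ 2), ?_, ?_⟩
  · rw [← hg₀, g.dist_eq, hφ.dist_eq]; rfl
  · rw [← hg₁, g.dist_eq, hφ.dist_eq]; rfl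

theorem IsUrysohn.exists_dist_le_and_dist_eq (hM : IsUrysohn D M) {r : ℝ} (hr : r ∈ D)
    {x x' z : M} (hxx' : dist x x' ≤ r) (hxz : r < dist x z) :
    ∃ w, dist w z ≤ r ∧ dist x w = dist x' z := by
  by_cases hx : x = x'
  · subst hx
    exact ⟨z, by simpa using hxx', rfl⟩
  have hr0 : 0 < r := (dist_pos.2 hx).trans_le hxx'
  have h₁ := dist_triangle x x' z
  have h₂ := dist_triangle_left x' z x
  obtain ⟨w, hxw, hzw⟩ := hM.exists_dist_eq_dist_eq (dist_pos.1 (hr0.trans hxz)) (hM.2.1 x' z)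
    hr (by linarith) hr0 ⟨by linarith, by linarith, by linarith⟩
  exact ⟨w, (dist_comm w z).trans hzw |>.le, hxw⟩

end Urysohn

section Jump

variable {D : Set ℝ} {M : Type} [MetricSpace M] {r : ℝ}

theorem IsJump.dist_le_of_dist_le (hr : IsJump D r) (hMD : ∀ x y : M, dist x y ∈ D)
    {x y z : M} (hxy : dist x y ≤ r) (hyz : dist y z ≤ r) : dist x z ≤ r := by
  by_contra! h
  linarith [hr.2 _ (hMD x z) h, dist_triangle x y z]

theorem IsJump.closedBall_eq (hr : IsJump D r) (hMD : ∀ x y : M, dist x y ∈ D) {a b : M}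
    (hab : dist a b ≤ r) : closedBall a r = closedBall b r := by
  ext x
  simp only [mem_closedBall]
  exact ⟨fun hx => hr.dist_le_of_dist_le hMD hx hab,
    fun hx => hr.dist_le_of_dist_le hMD hx (dist_comm a b ▸ hab)⟩

theorem IsJump.lt_dist_of_mem_closedBall (hr : IsJump D r) (hMD : ∀ x y : M, dist x y ∈ D)
    {a b x y : M} (hab : r < dist a b) (hx : x ∈ closedBall a r) (hy : y ∈ closedBall b r) :
    r < dist x y := by
  by_contra! hxy
  rw [mem_closedBall, dist_comm] at hx
  exact hab.not_ge <| hr.dist_le_of_dist_le hMD hx (hr.dist_le_of_dist_le hMD hxy hy)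

end Jump

section Dmin

variable {M : Type} [MetricSpace M] {A B A' C : Set M}

theorem dmin_comm (A B : Set M) : dmin A B = dmin B A := by
  unfold dmin
  congr 1
  ext d
  constructor <;> rintro ⟨x, hx, y, hy, rfl⟩ <;> exact ⟨y, hy, x, hx, dist_comm y x⟩

theorem dmin_nonneg (A B : Set M) : 0 ≤ dmin A B :=
  Real.sInf_nonneg <| by rintro _ ⟨x, -, y, -, rfl⟩; exact dist_nonneg

theorem dmin_le_dist {x y : M} (hx : x ∈ A) (hy : y ∈ B) : dmin A B ≤ dist x y :=
  csInf_le ⟨0, by rintro _ ⟨x, -, y, -, rfl⟩; exact dist_nonneg⟩ ⟨x, hx, y, hy, rfl⟩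

theorem le_dmin {K : ℝ} (hA : A.Nonempty) (hB : B.Nonempty)
    (h : ∀ x ∈ A, ∀ y ∈ B, K ≤ dist x y) : K ≤ dmin A B := by
  obtain ⟨x, hx⟩ := hA
  obtain ⟨y, hy⟩ := hB
  exact le_csInf ⟨_, x, hx, y, hy, rfl⟩ <| by rintro _ ⟨x, hx, y, hy, rfl⟩; exact h x hx y hy

theorem le_dmin_add_dmin {K : ℝ} (hA : A.Nonempty) (hB : B.Nonempty) (hA' : A'.Nonempty)
    (hC : C.Nonempty) (h : ∀ x ∈ A, ∀ y ∈ B, ∀ x' ∈ A', ∀ z ∈ C, K ≤ dist x y + dist x' z) :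
    K ≤ dmin A B + dmin A' C := by
  have : K - dmin A' C ≤ dmin A B := le_dmin hA hB fun x hx y hy => by
    have : K - dist x y ≤ dmin A' C := le_dmin hA' hC fun x' hx' z hz => by
      linarith [h x hx y hy x' hx' z hz]
    linarith
  linarith

end Dmin

theorem dmin_closedBall_le_dist_add_dist {D : Set ℝ} {M : Type} [MetricSpace M]
    (hM : IsUrysohn D M) {r : ℝ} (hr : IsJump D r) {a b c x x' y z : M} (hac : r < dist a c)
    (hx : x ∈ closedBall a r) (hx' : x' ∈ closedBall a r) (hy : y ∈ closedBall b r)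
    (hz : z ∈ closedBall c r) :
    dmin (closedBall b r) (closedBall c r) ≤ dist x y + dist x' z := by
  have hMD := hM.2.1
  have hxx' : dist x x' ≤ r := hr.dist_le_of_dist_le hMD hx (dist_comm x' a ▸ hx')
  obtain ⟨w, hwz, hxw⟩ := hM.exists_dist_le_and_dist_eq hr.1 hxx'
    (hr.lt_dist_of_mem_closedBall hMD hac hx hz)
  calc dmin (closedBall b r) (closedBall c r)
      ≤ dist y w := dmin_le_dist hy (hr.dist_le_of_dist_le hMD hwz hz)
    _ ≤ dist y x + dist x w := dist_triangle y x w
    _ = dist x y + dist x' z := by rw [dist_comm y x, hxw]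

theorem statement10_general (D : Set ℝ) (M : Type) [MetricSpace M]
    (hM : IsUrysohn D M) (r : ℝ) (hr : IsJump D r) (a b c : M) :
    dmin {x : M | dist x b ≤ r} {x : M | dist x c ≤ r} ≤
      dmin {x : M | dist x a ≤ r} {x : M | dist x b ≤ r} +
        dmin {x : M | dist x a ≤ r} {x : M | dist x c ≤ r} := by
  change dmin (closedBall b r) (closedBall c r) ≤
    dmin (closedBall a r) (closedBall b r) + dmin (closedBall a r) (closedBall c r)
  rcases lt_or_ge r 0 with hr0 | hr0
  · -- all three balls are empty, and `sInf ∅ = 0`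
    simp [dmin, closedBall_eq_empty.2 hr0]
  by_cases hac : dist a c ≤ r
  · rw [hr.closedBall_eq hM.2.1 hac, dmin_comm]
    linarith [dmin_nonneg (closedBall c r) (closedBall c r)]
  exact le_dmin_add_dmin (nonempty_closedBall.2 hr0) (nonempty_closedBall.2 hr0)
    (nonempty_closedBall.2 hr0) (nonempty_closedBall.2 hr0) fun x hx y hy x' hx' z hz =>
      dmin_closedBall_le_dist_add_dist hM hr (not_le.1 hac) hx hx' hy hz

theorem statement10 (D : Set ℝ) (hD : IsUniversalDist D) (M : Type) [MetricSpace M]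
    (hM : IsUrysohn D M) (r : ℝ) (hr : IsJump D r) (a b c : M) :
    dmin {x : M | dist x b ≤ r} {x : M | dist x c ≤ r} ≤
      dmin {x : M | dist x a ≤ r} {x : M | dist x b ≤ r} +
        dmin {x : M | dist x a ≤ r} {x : M | dist x c ≤ r} :=
  statement10_general D M hM r hr a b c

end Sauer
end

section
/- Let M be a countable Urysohn space with finite distance set D, A ⊆ M finite, and (t_i)_{i<s} Katětov functions with domain A. Let d'' be a metric on the index set {0,…,s−1} with d''(i,j) ∈ d(t_i, t_j) for all i ≠ j. Then the distance function d' on A ∪ {0,…,s−1} defined by d' = d on A, d' = d'' on indices, and d'(x,i) = t_i(x), is a metric; moreover any partial isometry of A ∪ C (C a subset of indices) into M fixing A pointwise extends to an isometry α of the whole space into M with α(i) ∈ orb(t_i) for all i. -/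
namespace Sauer

variable {D : Set ℝ} {M : Type} [MetricSpace M]

noncomputable def spDist2 {s : ℕ} (t : Fin s → Katetov D M)
    (d'' : Fin s → Fin s → ℝ) : M ⊕ Fin s → M ⊕ Fin s → ℝ
  | .inl x, .inl y => dist x y
  | .inl x, .inr i => (t i).f x
  | .inr i, .inl x => (t i).f x
  | .inr i, .inr j => d'' i j

def pts (A : Finset M) (s : ℕ) : Set (M ⊕ Fin s) :=
  (Sum.inl '' (A : Set M)) ∪ Set.range (Sum.inr : Fin s → M ⊕ Fin s)

/-! For `i ≠ j`, the value `d'' i j` is realized as `dist u v` with `u ∈ orb (t i)` and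
`v ∈ orb (t j)`, so the triangle inequality through any `x ∈ A` gives
`|t_i x - t_j x| ≤ d'' i j ≤ t_i x + t_j x`; these are exactly the mixed cases of the triangle
inequality for `spDist2`. The resulting finite pseudometric space has distances in `D`, so after
identifying points at distance `0` it embeds into `M`, and homogeneity of `M` moves the embedding
to one that is the identity on `A` and agrees with `β` on `C`. -/

theorem mem_orb_of_forall_dist_eq {t : Katetov D M} {y : M}
    (h : ∀ x ∈ t.dom, dist y x = t.f x) : y ∈ orb t := by
  refine ⟨fun hy => ?_, h⟩
  have := t.pos y hy
  rw [← h y hy, dist_self] at this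
  exact this.false

theorem le_add_of_mem_orbDistSet {s t : Katetov D M} {m : ℝ} (hm : m ∈ orbDistSet s t)
    {x : M} (hs : x ∈ s.dom) (ht : x ∈ t.dom) : m ≤ s.f x + t.f x := by
  obtain ⟨u, ⟨-, hu⟩, v, ⟨-, hv⟩, rfl⟩ := hm
  calc dist u v ≤ dist u x + dist v x := dist_triangle_right u v x
    _ = s.f x + t.f x := by rw [hu x hs, hv x ht]

theorem abs_sub_le_of_mem_orbDistSet {s t : Katetov D M} {m : ℝ} (hm : m ∈ orbDistSet s t)
    {x : M} (hs : x ∈ s.dom) (ht : x ∈ t.dom) : |s.f x - t.f x| ≤ m := by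
  obtain ⟨u, ⟨-, hu⟩, v, ⟨-, hv⟩, rfl⟩ := hm
  rw [← hu x hs, ← hv x ht]
  exact abs_dist_sub_le u v x

section Amalgam

variable {s : ℕ} (t : Fin s → Katetov D M) {A : Finset M}
  (d'' : Fin s → Fin s → ℝ)

theorem spDist2_triangle (hdom : ∀ i, (t i).dom = A) (h0 : ∀ i, d'' i i = 0)
    (hsym : ∀ i j, d'' i j = d'' j i) (htri : ∀ i j k, d'' i k ≤ d'' i j + d'' j k)
    (hmem : ∀ i j, i ≠ j → d'' i j ∈ orbDistSet (t i) (t j)) :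
    ∀ p ∈ pts A s, ∀ q ∈ pts A s, ∀ w ∈ pts A s,
      spDist2 t d'' p w ≤ spDist2 t d'' p q + spDist2 t d'' q w := by
  have hA : ∀ i, ∀ x ∈ A, x ∈ (t i).dom := fun i x hx => (hdom i).symm ▸ hx
  have hle_add : ∀ i j, ∀ x ∈ A, d'' i j ≤ (t i).f x + (t j).f x := by
    intro i j x hx
    obtain rfl | hij := eq_or_ne i j
    · linarith [h0 i, (t i).pos x (hA i x hx)]
    · exact le_add_of_mem_orbDistSet (hmem i j hij) (hA i x hx) (hA j x hx)
  have hsub_le : ∀ i j, ∀ x ∈ A, (t i).f x - (t j).f x ≤ d'' i j := by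
    intro i j x hx
    obtain rfl | hij := eq_or_ne i j
    · simp [h0]
    · exact (le_abs_self _).trans
        (abs_sub_le_of_mem_orbDistSet (hmem i j hij) (hA i x hx) (hA j x hx))
  have hf_sub_le : ∀ i, ∀ x ∈ A, ∀ y ∈ A, (t i).f x - (t i).f y ≤ dist x y :=
    fun i x hx y hy => (le_abs_self _).trans ((t i).ineq1 x (hA i x hx) y (hA i y hy))
  rintro _ (⟨x, hx, rfl⟩ | ⟨i, rfl⟩) _ (⟨y, hy, rfl⟩ | ⟨j, rfl⟩) _ (⟨z, hz, rfl⟩ | ⟨k, rfl⟩) <;>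
    simp only [spDist2]
  · exact dist_triangle x y z
  · linarith [hf_sub_le k x hx y hy]
  · exact (t j).ineq2 x (hA j x hx) z (hA j z hz)
  · linarith [hsub_le k j x hx, hsym k j]
  · linarith [hf_sub_le i z hz y hy, dist_comm y z]
  · exact hle_add i k y hy
  · linarith [hsub_le i j z hz]
  · exact htri i j k

theorem spDist2_mem (hdom : ∀ i, (t i).dom = A) (h0 : ∀ i, d'' i i = 0)
    (hmem : ∀ i j, i ≠ j → d'' i j ∈ orbDistSet (t i) (t j))
    (hMD : ∀ x y : M, dist x y ∈ D) (hD0 : (0 : ℝ) ∈ D) :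
    ∀ p ∈ pts A s, ∀ q ∈ pts A s, spDist2 t d'' p q ∈ D := by
  rintro _ (⟨x, hx, rfl⟩ | ⟨i, rfl⟩) _ (⟨y, hy, rfl⟩ | ⟨j, rfl⟩) <;> simp only [spDist2]
  · exact hMD x y
  · exact (t j).mem x ((hdom j).symm ▸ hx)
  · exact (t i).mem y ((hdom i).symm ▸ hy)
  · obtain rfl | hij := eq_or_ne i j
    · exact h0 i ▸ hD0
    · obtain ⟨u, -, v, -, huv⟩ := hmem i j hij
      exact huv ▸ hMD u v

end Amalgam

namespace IsUrysohn

theorem exists_dist_eq_s12 (hM : IsUrysohn D M) {X : Type} [PseudoMetricSpace X] [Finite X]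
    (hX : ∀ a b : X, dist a b ∈ D) : ∃ ψ : X → M, ∀ a b, dist (ψ a) (ψ b) = dist a b := by
  have : Finite (SeparationQuotient X) := Quotient.finite _
  have hXD : ∀ p q : SeparationQuotient X, dist p q ∈ D := by
    rintro ⟨a⟩ ⟨b⟩
    exact hX a b
  obtain ⟨f, hf⟩ := hM.2.2.2 (SeparationQuotient X) this hXD
  exact ⟨f ∘ SeparationQuotient.mk, fun a b => by
    rw [Function.comp_apply, Function.comp_apply, hf.dist_eq, SeparationQuotient.dist_mk]⟩

/-- The mapping extension property, for a finite pseudometric space given by its distance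
function `d`. -/
theorem exists_extension (hM : IsUrysohn D M) {X : Type} [Finite X] (d : X → X → ℝ)
    (d_self : ∀ a, d a a = 0) (d_comm : ∀ a b, d a b = d b a)
    (d_triangle : ∀ a b c, d a c ≤ d a b + d b c) (hdD : ∀ a b, d a b ∈ D)
    (S : Set X) (β : X → M) (hβ : ∀ a ∈ S, ∀ b ∈ S, dist (β a) (β b) = d a b) :
    ∃ φ : X → M, (∀ a b, dist (φ a) (φ b) = d a b) ∧ ∀ a ∈ S, φ a = β a := by
  classical
  let _ : PseudoMetricSpace X :=
    { dist := d, dist_self := d_self, dist_comm := d_comm, dist_triangle := d_triangle }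
  obtain ⟨ψ, hψ⟩ := hM.exists_dist_eq_s12 hdD
  -- `β` factors through `ψ` on `S`: points with the same image under `ψ` are at distance 0.
  let g₀ : M → M := fun y => if h : ∃ a ∈ S, ψ a = y then β h.choose else y
  have hg₀ : ∀ a ∈ S, g₀ (ψ a) = β a := by
    intro a ha
    have h : ∃ b ∈ S, ψ b = ψ a := ⟨a, ha, rfl⟩
    obtain ⟨hbS, hb⟩ := h.choose_spec
    simp only [g₀, dif_pos h]
    rw [← dist_eq_zero, hβ _ hbS a ha]
    exact (hψ _ a).symm.trans (by rw [hb, dist_self])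
  let T : Finset M := (S.toFinite.image ψ).toFinset
  have hT : ∀ y ∈ T, ∃ a ∈ S, ψ a = y := fun y hy => by simpa [T] using hy
  obtain ⟨g, hg⟩ := hM.2.2.1 T g₀ (by
    intro y hy z hz
    obtain ⟨a, ha, rfl⟩ := hT y hy
    obtain ⟨b, hb, rfl⟩ := hT z hz
    rw [hg₀ a ha, hg₀ b hb, hβ a ha b hb, hψ]
    rfl)
  refine ⟨g ∘ ψ, fun a b => by simp only [Function.comp_apply, g.dist_eq, hψ]; rfl,
    fun a ha => ?_⟩
  rw [Function.comp_apply, hg _ (by simpa [T] using ⟨a, ha, rfl⟩), hg₀ a ha]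

end IsUrysohn

theorem statement12 (D : Set ℝ) (hD : IsUniversalDist D) (M : Type) [MetricSpace M]
    (hM : IsUrysohn D M) (s : ℕ) (t : Fin s → Katetov D M) (A : Finset M)
    (hdom : ∀ i, (t i).dom = A)
    (d'' : Fin s → Fin s → ℝ)
    (h0 : ∀ i, d'' i i = 0) (hsym : ∀ i j, d'' i j = d'' j i)
    (htri : ∀ i j k, d'' i k ≤ d'' i j + d'' j k)
    (hmem : ∀ i j, i ≠ j → d'' i j ∈ orbDistSet (t i) (t j)) :
    (∀ p ∈ pts A s, ∀ q ∈ pts A s, ∀ w ∈ pts A s,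
        spDist2 t d'' p w ≤ spDist2 t d'' p q + spDist2 t d'' q w) ∧
    ∀ (C : Finset (Fin s)) (β : Fin s → M),
      (∀ i ∈ C, ∀ x ∈ A, dist (β i) x = (t i).f x) →
      (∀ i ∈ C, ∀ j ∈ C, dist (β i) (β j) = d'' i j) →
      ∃ α : Fin s → M, (∀ i ∈ C, α i = β i) ∧ (∀ i, α i ∈ orb (t i)) ∧
        ∀ i j, dist (α i) (α j) = d'' i j := by
  have htriangle := spDist2_triangle t d'' hdom h0 hsym htri hmem
  refine ⟨htriangle, fun C β hβA hβC => ?_⟩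
  let e : A ⊕ Fin s → M ⊕ Fin s := Sum.map Subtype.val id
  have he : ∀ a, e a ∈ pts A s := by
    rintro (⟨x, hx⟩ | i)
    exacts [Or.inl ⟨x, hx, rfl⟩, Or.inr ⟨i, rfl⟩]
  obtain ⟨φ, hφ, hφβ⟩ := hM.exists_extension (fun a b => spDist2 t d'' (e a) (e b))
    (by rintro (x | i) <;> simp [e, spDist2, h0])
    (by rintro (x | i) (y | j) <;> simp [e, spDist2, dist_comm, hsym])
    (fun a b c => htriangle _ (he a) _ (he b) _ (he c))
    (fun a b => spDist2_mem t d'' hdom h0 hmem hM.2.1 hD.2.1 _ (he a) _ (he b))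
    (Set.range Sum.inl ∪ Sum.inr '' C) (Sum.elim Subtype.val β) (by
      rintro _ (⟨x, rfl⟩ | ⟨i, hi, rfl⟩) _ (⟨y, rfl⟩ | ⟨j, hj, rfl⟩) <;>
        simp only [e, Sum.elim_inl, Sum.elim_inr, Sum.map_inl, Sum.map_inr, id, spDist2]
      · exact (dist_comm _ _).trans (hβA j hj x x.2)
      · exact hβA i hi y y.2
      · exact hβC i hi j hj)
  have hφA : ∀ x : A, φ (.inl x) = x := fun x => hφβ _ (Or.inl ⟨x, rfl⟩)
  refine ⟨fun i => φ (.inr i), fun i hi => hφβ _ (Or.inr ⟨i, hi, rfl⟩),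
    fun i => mem_orb_of_forall_dist_eq fun x hx => ?_, fun i j => hφ _ _⟩
  rw [hdom i] at hx
  simpa [hφA, e, spDist2] using hφ (.inr i) (.inl ⟨x, hx⟩)

end Sauer
end
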